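/- For every open invariant subset U of the boundary path space X one has U_{H_U, S_U} = U. -/

import Mathlib

namespace GraphLPA

/-- A directed graph: vertices, edges, and source/range maps. -/
structure DirGraph where
  V : Type
  Ed : Type
  src : Ed → V
  rng : Ed → V

/-- A vertex is a sink if it emits no edges. -/
def IsSink (G : DirGraph) (v : G.V) : Prop := ∀ e : G.Ed, G.src e ≠ v

/-- A vertex is an infinite emitter if it emits infinitely many edges. -/
def IsInfEmitter (G : DirGraph) (v : G.V) : Prop := {e : G.Ed | G.src e = v}.Infinite

/-- A vertex is regular if it is neither a sink nor an infinite emitter. -/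
def IsRegular (G : DirGraph) (v : G.V) : Prop := ¬ IsSink G v ∧ ¬ IsInfEmitter G v

/-- A (raw) finite path: a starting vertex together with a list of edges.
A vertex is regarded as the finite path with empty edge list. -/
structure FinPath (G : DirGraph) where
  start : G.V
  edges : List G.Ed

/-- The range of a finite path: the range of its last edge, or its start if it has length 0. -/
def FinPath.range {G : DirGraph} (p : FinPath G) : G.V :=
  match p.edges.getLast? with
  | none => p.start
  | some e => G.rng e

/-- The validity condition for a finite path: the first edge (if any) starts at `start`,
and consecutive edges are composable. -/
def FinPath.IsPath {G : DirGraph} (p : FinPath G) : Prop :=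
  (∀ e ∈ p.edges.head?, G.src e = p.start) ∧
    p.edges.Chain' (fun e f => G.rng e = G.src f)

/-- An infinite sequence of edges is an infinite path if consecutive edges are composable. -/
def InfIsPath (G : DirGraph) (f : ℕ → G.Ed) : Prop :=
  ∀ n, G.rng (f n) = G.src (f (n + 1))

/-- Raw boundary paths: either a finite path or an infinite sequence of edges. -/
inductive BPath (G : DirGraph) where
  | fin : FinPath G → BPath G
  | inf : (ℕ → G.Ed) → BPath G

/-- The source of a boundary path. -/
def BPath.start {G : DirGraph} : BPath G → G.V
  | .fin p => p.start
  | .inf f => G.src (f 0)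

/-- Membership in the boundary path space: a valid finite path whose range
is a sink or infinite emitter, or a valid infinite path. -/
def BPath.IsBoundary {G : DirGraph} : BPath G → Prop
  | .fin p => p.IsPath ∧ (IsSink G p.range ∨ IsInfEmitter G p.range)
  | .inf f => InfIsPath G f

/-- A vertex occurring on a boundary path (the source, or the range of any of its edges). -/
def BPath.vertexOn {G : DirGraph} : BPath G → G.V → Prop
  | .fin p, v => p.start = v ∨ ∃ e ∈ p.edges, G.rng e = v
  | .inf f, v => G.src (f 0) = v ∨ ∃ n, G.rng (f n) = v

/-- The boundary path space `X` of the graph `G`. -/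
def BPS (G : DirGraph) : Type := { x : BPath G // x.IsBoundary }

/-- Concatenation `μx` of a finite path `μ` with a boundary path `x`. -/
def FinPath.catB {G : DirGraph} (μ : FinPath G) : BPath G → BPath G
  | .fin p => .fin ⟨μ.start, μ.edges ++ p.edges⟩
  | .inf f => .inf (fun n => if h : n < μ.edges.length then μ.edges[n] else f (n - μ.edges.length))

/-- The cylinder set `Z(μ) = {μx : x ∈ X, s(x) = r(μ)}`. -/
def ZSet {G : DirGraph} (μ : FinPath G) : Set (BPS G) :=
  { x | ∃ z : BPS G, z.1.start = μ.range ∧ x.1 = μ.catB z.1 }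

/-- The finite path `μe` obtained by appending an edge. -/
def FinPath.extend {G : DirGraph} (μ : FinPath G) (e : G.Ed) : FinPath G :=
  ⟨μ.start, μ.edges ++ [e]⟩

/-- The basic set `Z(μ∖F) = Z(μ) ∖ ⋃_{e ∈ F} Z(μe)`. -/
def ZSetMinus {G : DirGraph} (μ : FinPath G) (F : Finset G.Ed) : Set (BPS G) :=
  ZSet μ \ ⋃ e ∈ F, ZSet (μ.extend e)

/-- The topology on the boundary path space generated by the sets `Z(μ∖F)`. -/
instance BPS.instTopologicalSpace (G : DirGraph) : TopologicalSpace (BPS G) :=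
  TopologicalSpace.generateFrom
    { U | ∃ (μ : FinPath G) (F : Finset G.Ed),
        μ.IsPath ∧ (∀ e ∈ F, G.src e = μ.range) ∧ U = ZSetMinus μ F }

/-- A subset `U ⊆ X` is invariant if whenever `αz ∈ U` with `α, β` finite paths with
`r(α) = r(β)` and `s(z) = r(α)`, then `βz ∈ U`. -/
def IsInvariant {G : DirGraph} (U : Set (BPS G)) : Prop :=
  ∀ α β : FinPath G, α.IsPath → β.IsPath → α.range = β.range →
    ∀ z : BPS G, z.1.start = α.range →
      ∀ x y : BPS G, x.1 = α.catB z.1 → y.1 = β.catB z.1 → x ∈ U → y ∈ U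

/-- A set of vertices is hereditary if it is closed under ranges of edges out of it. -/
def Hereditary (G : DirGraph) (H : Set G.V) : Prop :=
  ∀ e : G.Ed, G.src e ∈ H → G.rng e ∈ H

/-- A set of vertices is saturated if it contains every regular vertex all of whose
emitted edges have range in it. -/
def Saturated (G : DirGraph) (H : Set G.V) : Prop :=
  ∀ v : G.V, IsRegular G v → (∀ e : G.Ed, G.src e = v → G.rng e ∈ H) → v ∈ H

/-- The set `B_H` of breaking vertices of a hereditary set `H`. -/
def BreakVerts (G : DirGraph) (H : Set G.V) : Set G.V :=
  { v | v ∉ H ∧ IsInfEmitter G v ∧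
      { e : G.Ed | G.src e = v ∧ G.rng e ∉ H }.Finite ∧
      { e : G.Ed | G.src e = v ∧ G.rng e ∉ H }.Nonempty }

/-- `U_H`: the boundary paths on which some vertex of `H` occurs. -/
def UH {G : DirGraph} (H : Set G.V) : Set (BPS G) :=
  { x | ∃ v ∈ H, x.1.vertexOn v }

/-- `U_S`: the boundary paths that are finite paths with range in `S`. -/
def US {G : DirGraph} (S : Set G.V) : Set (BPS G) :=
  { x | ∃ p : FinPath G, x.1 = BPath.fin p ∧ p.range ∈ S }

/-- `U_{H,S} = U_H ∪ U_S`. -/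
def UHS {G : DirGraph} (H S : Set G.V) : Set (BPS G) := UH H ∪ US S

/-- `H_U = {v : Z(v) ⊆ U}`. -/
def HOf {G : DirGraph} (U : Set (BPS G)) : Set G.V :=
  { v | ZSet (⟨v, []⟩ : FinPath G) ⊆ U }

/-- `S_U`: ranges of finite paths in `U` whose range is an infinite emitter not in `H_U`. -/
def SOf {G : DirGraph} (U : Set (BPS G)) : Set G.V :=
  { w | ∃ x ∈ U, ∃ p : FinPath G, x.1 = BPath.fin p ∧ p.range = w ∧
      IsInfEmitter G w ∧ w ∉ HOf U }

/-- `Path(v, H)`: the finite paths of positive length with source `v` and range in `H`. -/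
def PathTo {G : DirGraph} (v : G.V) (H : Set G.V) : Set (FinPath G) :=
  { p | p.IsPath ∧ p.start = v ∧ p.edges ≠ [] ∧ p.range ∈ H }

/-- Condition (a): every infinite path all of whose vertices lie outside `H`
eventually does not connect to `H`. -/
def CondA (G : DirGraph) (H : Set G.V) : Prop :=
  ∀ f : ℕ → G.Ed, InfIsPath G f →
    (G.src (f 0) ∉ H ∧ ∀ n, G.rng (f n) ∉ H) →
    ∃ N : ℕ, PathTo (G.rng (f N)) H = ∅

/-- Condition (b) with target set `S`: every vertex emitting infinitely many edges
that connect to `H` belongs to `H ∪ S`. -/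
def CondB (G : DirGraph) (H S : Set G.V) : Prop :=
  ∀ v : G.V,
    { e : G.Ed | G.src e = v ∧ (PathTo (G.rng e) H).Nonempty }.Infinite → v ∈ H ∪ S

/-- An `H`-compatible path: a finite path of positive length with range in `H`
whose last edge has source outside `H ∪ B_H`. -/
def HCompatible {G : DirGraph} (H : Set G.V) (p : FinPath G) : Prop :=
  p.IsPath ∧ p.edges ≠ [] ∧ p.range ∈ H ∧
    ∀ e ∈ p.edges.getLast?, G.src e ∉ H ∪ BreakVerts G H

/-- `C_{v,H}`: the set of `H`-compatible paths with source `v`. -/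
def CSet {G : DirGraph} (v : G.V) (H : Set G.V) : Set (FinPath G) :=
  { p | p.start = v ∧ HCompatible H p }

end GraphLPA

namespace GraphLPA

section Helpers
variable {G : DirGraph}

lemma head?_eq_some' {α : Type*} (l : List α) (h : 0 < l.length) : l.head? = some (l[0]) := by
  cases l with
  | nil => simp at h
  | cons a t => rfl

lemma getLast?_eq_some' {α : Type*} (l : List α) (h : 0 < l.length) :
    l.getLast? = some (l[l.length - 1]) := by
  rw [List.getLast?_eq_getElem?, List.getElem?_eq_getElem (by omega)]

lemma range_of_getLast? {p : FinPath G} {e : G.Ed} (h : p.edges.getLast? = some e) :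
    p.range = G.rng e := by
  unfold FinPath.range; rw [h]

lemma range_of_nil {p : FinPath G} (h : p.edges.getLast? = none) :
    p.range = p.start := by
  unfold FinPath.range; rw [h]

lemma range_nil (v : G.V) : (⟨v, []⟩ : FinPath G).range = v := rfl

lemma range_pos {p : FinPath G} (h : 0 < p.edges.length) :
    p.range = G.rng (p.edges[p.edges.length - 1]) :=
  range_of_getLast? (getLast?_eq_some' _ h)

lemma range_zero {p : FinPath G} (h : p.edges.length = 0) : p.range = p.start := by
  apply range_of_nil
  rw [List.length_eq_zero_iff] at h
  rw [h]; rfl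

lemma start_src {p : FinPath G} (hp : p.IsPath) (h : 0 < p.edges.length) :
    G.src (p.edges[0]) = p.start :=
  hp.1 _ (by rw [head?_eq_some' _ h]; rfl)

lemma getElem_idx {α : Type*} (l : List α) {i j : ℕ} (hij : i = j) (hi : i < l.length)
    (hj : j < l.length) : l[i]'hi = l[j]'hj := by subst hij; rfl

lemma chain_getElem {p : FinPath G} (hp : p.IsPath) {i : ℕ} (h : i + 1 < p.edges.length) :
    G.rng (p.edges[i]) = G.src (p.edges[i + 1]) := by
  have := List.isChain_iff_getElem.mp hp.2 i (by omega)
  simpa using this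

lemma chain_getElem' {p : FinPath G} (hp : p.IsPath) {i j : ℕ} (hj : j < p.edges.length)
    (hij : i + 1 = j) : G.rng (p.edges[i]'(by omega)) = G.src (p.edges[j]'hj) := by
  subst hij; exact chain_getElem hp hj

lemma trivial_isPath (v : G.V) : (⟨v, []⟩ : FinPath G).IsPath :=
  ⟨by simp, List.isChain_nil⟩

/-- The `n`-th edge of a boundary path, if any. -/
def BPath.edgeAt : BPath G → ℕ → Option G.Ed
  | .fin p, n => p.edges[n]?
  | .inf f, n => some (f n)

/-- `μ` is an initial segment of the boundary path `x`. -/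
def PrefixOf (μ : FinPath G) (x : BPath G) : Prop :=
  x.start = μ.start ∧ ∀ i, (h : i < μ.edges.length) → x.edgeAt i = some (μ.edges[i])

lemma trivial_catB {v : G.V} {z : BPath G} (h : z.start = v) :
    (⟨v, []⟩ : FinPath G).catB z = z := by
  cases z with
  | fin p =>
    obtain ⟨ps, pe⟩ := p
    have : ps = v := h
    subst this
    show BPath.fin ⟨ps, [] ++ pe⟩ = _
    rw [List.nil_append]
  | inf f =>
    show BPath.inf _ = _
    congr 1

lemma extend_isPath {μ : FinPath G} (hμ : μ.IsPath) {e : G.Ed} (he : G.src e = μ.range) :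
    (μ.extend e).IsPath := by
  constructor
  · intro a ha
    rcases Nat.eq_zero_or_pos μ.edges.length with h0 | h0
    · rw [List.length_eq_zero_iff] at h0
      unfold FinPath.extend at ha
      rw [h0] at ha
      simp at ha
      subst ha
      rw [he, range_zero (by simp [h0])]; rfl
    · unfold FinPath.extend at ha
      have : (μ.edges ++ [e]).head? = μ.edges.head? := by
        cases h' : μ.edges with
        | nil => rw [h'] at h0; simp at h0
        | cons b t => simp
      rw [this] at ha
      exact hμ.1 a ha
  · apply List.IsChain.append hμ.2 (List.isChain_singleton e)
    intro a ha b hb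
    simp at hb
    subst hb
    rw [range_of_getLast? ha] at he
    exact he.symm

lemma extend_length (μ : FinPath G) (e : G.Ed) :
    (μ.extend e).edges.length = μ.edges.length + 1 := by
  unfold FinPath.extend; simp

lemma extend_getElem_lt (μ : FinPath G) (e : G.Ed) {i : ℕ} (h : i < μ.edges.length) :
    ((μ.extend e).edges)[i]'(by rw [extend_length]; omega) = μ.edges[i] := by
  unfold FinPath.extend
  exact List.getElem_append_left h

lemma extend_getElem_last (μ : FinPath G) (e : G.Ed) :
    ((μ.extend e).edges)[μ.edges.length]'(by rw [extend_length]; omega) = e := by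
  unfold FinPath.extend
  simp

lemma extend_range (μ : FinPath G) (e : G.Ed) : (μ.extend e).range = G.rng e :=
  range_of_getLast? (by unfold FinPath.extend; simp)

lemma extend_start (μ : FinPath G) (e : G.Ed) : (μ.extend e).start = μ.start := rfl

end Helpers
section ZSetChar
variable {G : DirGraph}

lemma prefixOf_of_mem {μ : FinPath G} (hμ : μ.IsPath) {x : BPS G} (hx : x ∈ ZSet μ) :
    PrefixOf μ x.1 := by
  obtain ⟨z, hzs, hxe⟩ := hx
  cases hz1 : z.1 with
  | fin q =>
    rw [hz1] at hxe hzs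
    rw [hxe]
    exact ⟨rfl, fun i hi => by
      show (μ.edges ++ q.edges)[i]? = some (μ.edges[i])
      rw [List.getElem?_append_left hi, List.getElem?_eq_getElem hi]⟩
  | inf f =>
    rw [hz1] at hxe hzs
    rw [hxe]
    constructor
    · show G.src (if h : 0 < μ.edges.length then _ else _) = μ.start
      rcases Nat.eq_zero_or_pos μ.edges.length with h0 | h0
      · rw [dif_neg (by omega)]
        have h1 : (0:ℕ) - μ.edges.length = 0 := by omega
        rw [h1]
        exact hzs.trans (range_zero h0)
      · rw [dif_pos h0]
        exact start_src hμ h0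
    · intro i hi
      show some (if h : i < μ.edges.length then _ else _) = _
      rw [dif_pos hi]

lemma mem_of_prefixOf {μ : FinPath G} (hμ : μ.IsPath) {x : BPS G} (h : PrefixOf μ x.1) :
    x ∈ ZSet μ := by
  obtain ⟨x1, hxb⟩ := x
  cases x1 with
  | fin p =>
    obtain ⟨hst, hpre⟩ := h
    have hst' : p.start = μ.start := hst
    have hpp : p.IsPath := hxb.1
    have hbd := hxb.2
    have hlen : μ.edges.length ≤ p.edges.length := by
      rcases Nat.eq_zero_or_pos μ.edges.length with h0 | h0
      · omega
      · by_contra hc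
        have := hpre (μ.edges.length - 1) (by omega)
        rw [show (BPath.fin p).edgeAt (μ.edges.length - 1) = p.edges[μ.edges.length - 1]? from rfl,
          List.getElem?_eq_none (by omega)] at this
        simp at this
    have hgl : ∀ i, (hi : i < μ.edges.length) → p.edges[i]'(by omega) = μ.edges[i] := by
      intro i hi
      have := hpre i hi
      rw [show (BPath.fin p).edgeAt i = p.edges[i]? from rfl,
        List.getElem?_eq_getElem (by omega)] at this
      exact Option.some.inj this
    have hsrc : ∀ e ∈ (p.edges.drop μ.edges.length).head?, G.src e = μ.range := by
      intro e he
      rw [List.head?_drop] at he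
      have he' : p.edges[μ.edges.length]? = some e := he.symm ▸ rfl
      have hlt : μ.edges.length < p.edges.length := by
        by_contra hc
        rw [List.getElem?_eq_none (by omega)] at he'
        simp at he'
      have pe : p.edges[μ.edges.length] = e := by
        rw [List.getElem?_eq_getElem hlt] at he'
        exact Option.some.inj he'
      rw [← pe]
      rcases Nat.eq_zero_or_pos μ.edges.length with h0 | h0
      · rw [range_zero h0, ← hst',
          getElem_idx p.edges (show μ.edges.length = 0 from h0) hlt (by omega)]
        exact start_src hpp (by omega)
      · rw [← chain_getElem' hpp hlt (show μ.edges.length - 1 + 1 = μ.edges.length from by omega),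
          hgl (μ.edges.length - 1) (by omega)]
        exact (range_pos h0).symm
    have hr : FinPath.range ⟨μ.range, p.edges.drop μ.edges.length⟩ = p.range := by
      rcases Nat.lt_or_ge μ.edges.length p.edges.length with hlt | hge
      · have hd : 0 < (p.edges.drop μ.edges.length).length := by
          rw [List.length_drop]; omega
        rw [show FinPath.range ⟨μ.range, p.edges.drop μ.edges.length⟩
            = G.rng ((p.edges.drop μ.edges.length)[(p.edges.drop μ.edges.length).length - 1]'(
              by rw [List.length_drop]; omega)) from range_pos hd,
          range_pos (show 0 < p.edges.length by omega)]
        rw [List.getElem_drop]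
        exact congrArg G.rng (getElem_idx p.edges
          (by rw [List.length_drop]; omega) (by rw [List.length_drop]; omega) (by omega))
      · have heq : μ.edges.length = p.edges.length := le_antisymm hlen hge
        have hd : p.edges.drop μ.edges.length = [] := List.drop_eq_nil_of_le hge
        rcases Nat.eq_zero_or_pos μ.edges.length with h0 | h0
        · rw [range_zero (show (FinPath.mk μ.range (p.edges.drop μ.edges.length)).edges.length = 0
              from by simp [hd]), range_zero (show p.edges.length = 0 from by omega)]
          show μ.range = p.start
          exact (range_zero h0).trans hst'.symm
        · rw [range_zero (show (FinPath.mk μ.range (p.edges.drop μ.edges.length)).edges.length = 0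
              from by simp [hd]), range_pos (show 0 < p.edges.length from by omega)]
          rw [range_pos h0]
          show G.rng μ.edges[μ.edges.length - 1] = _
          rw [← hgl (μ.edges.length - 1) (by omega)]
          exact congrArg G.rng (getElem_idx p.edges (by omega) (by omega) (by omega))
    refine ⟨⟨.fin ⟨μ.range, p.edges.drop μ.edges.length⟩,
      ⟨⟨hsrc, hpp.2.drop μ.edges.length⟩, by rw [hr]; exact hbd⟩⟩, rfl, ?_⟩
    have hμe : μ.edges = p.edges.take μ.edges.length := by
      apply List.ext_getElem (by rw [List.length_take]; omega)
      intro n h1 h2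
      rw [List.getElem_take]
      exact (hgl n h1).symm
    have hcat : μ.edges ++ p.edges.drop μ.edges.length = p.edges := by
      have h5 := List.take_append_drop μ.edges.length p.edges
      rw [← hμe] at h5
      exact h5
    show BPath.fin p = BPath.fin ⟨μ.start, μ.edges ++ p.edges.drop μ.edges.length⟩
    rw [hcat, ← hst']
  | inf f =>
    obtain ⟨hst, hpre⟩ := h
    have hst' : G.src (f 0) = μ.start := hst
    have hinf : InfIsPath G f := hxb
    have hf : ∀ i, (hi : i < μ.edges.length) → f i = μ.edges[i] :=
      fun i hi => Option.some.inj (hpre i hi)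
    have hzs : G.src (f μ.edges.length) = μ.range := by
      rcases Nat.eq_zero_or_pos μ.edges.length with h0 | h0
      · rw [h0]
        exact hst'.trans (range_zero h0).symm
      · have hc := hinf (μ.edges.length - 1)
        rw [show μ.edges.length - 1 + 1 = μ.edges.length from by omega] at hc
        rw [← hc, hf (μ.edges.length - 1) (by omega)]
        exact (range_pos h0).symm
    refine ⟨⟨.inf (fun k => f (k + μ.edges.length)), ?_⟩, ?_, ?_⟩
    · intro n
      have := hinf (n + μ.edges.length)
      rwa [show n + μ.edges.length + 1 = n + 1 + μ.edges.length from by omega] at this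
    · show G.src (f (0 + μ.edges.length)) = μ.range
      rw [Nat.zero_add]
      exact hzs
    · show BPath.inf f = BPath.inf _
      congr 1
      funext n
      by_cases hn : n < μ.edges.length
      · rw [dif_pos hn]
        exact hf n hn
      · rw [dif_neg hn]
        congr 1
        omega

lemma isBoundary_catB {μ : FinPath G} (hμ : μ.IsPath) {z : BPath G} (hz : z.IsBoundary)
    (hs : z.start = μ.range) : (μ.catB z).IsBoundary := by
  cases z with
  | fin q =>
    have hq : q.IsPath := hz.1
    have hs' : q.start = μ.range := hs
    constructor
    · constructor
      · intro e he
        show G.src e = μ.start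
        rcases Nat.eq_zero_or_pos μ.edges.length with h0 | h0
        · have h0' : μ.edges = [] := List.length_eq_zero_iff.mp h0
          rw [show (⟨μ.start, μ.edges ++ q.edges⟩ : FinPath G).edges.head? = q.edges.head? from
            by rw [show (⟨μ.start, μ.edges ++ q.edges⟩ : FinPath G).edges = μ.edges ++ q.edges from rfl, h0', List.nil_append]] at he
          rw [hq.1 e he, hs', range_zero h0]
        · have hne : μ.edges ≠ [] := by intro hc; rw [hc] at h0; simp at h0
          have : (μ.edges ++ q.edges).head? = μ.edges.head? := by
            cases h' : μ.edges with
            | nil => exact absurd h' hne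
            | cons a t => simp
          rw [show (⟨μ.start, μ.edges ++ q.edges⟩ : FinPath G).edges.head? = μ.edges.head? from this] at he
          exact hμ.1 e he
      · apply List.IsChain.append hμ.2 hq.2
        intro a ha b hb
        rw [← range_of_getLast? ha, ← hs']
        exact (hq.1 b hb).symm
    · have hr : (⟨μ.start, μ.edges ++ q.edges⟩ : FinPath G).range = q.range := by
        by_cases hq0 : q.edges = []
        · have hmk : (⟨μ.start, μ.edges ++ q.edges⟩ : FinPath G) = ⟨μ.start, μ.edges⟩ := by
            rw [hq0, List.append_nil]
          rw [hmk]
          show μ.range = q.range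
          exact ((range_zero (by simp [hq0])).trans hs').symm
        · have h2 : 0 < q.edges.length := List.length_pos_iff.mpr hq0
          have h3 : (μ.edges ++ q.edges).getLast? = q.edges.getLast? :=
            List.getLast?_append_of_ne_nil _ hq0
          rw [range_of_getLast? (h3.trans (getLast?_eq_some' _ h2)), range_pos h2]
      rw [hr]
      exact hz.2
  | inf f =>
    intro n
    show G.rng (if h : n < μ.edges.length then _ else _)
      = G.src (if h : n + 1 < μ.edges.length then _ else _)
    by_cases h1 : n + 1 < μ.edges.length
    · rw [dif_pos (show n < μ.edges.length by omega), dif_pos h1]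
      exact chain_getElem hμ h1
    · by_cases h2 : n < μ.edges.length
      · rw [dif_pos h2, dif_neg h1]
        have h3 : n + 1 - μ.edges.length = 0 := by omega
        rw [h3]
        have hn : n = μ.edges.length - 1 := by omega
        rw [show G.src (f 0) = μ.range from hs, range_pos (show 0 < μ.edges.length by omega)]
        exact congrArg G.rng (getElem_idx μ.edges (by omega) (by omega) (by omega))
      · rw [dif_neg h2, dif_neg h1]
        have := hz (n - μ.edges.length)
        rwa [show n - μ.edges.length + 1 = n + 1 - μ.edges.length from by omega] at this

lemma mem_trivial_ZSet {v : G.V} {z : BPS G} (h : z.1.start = v) : z ∈ ZSet ⟨v, []⟩ :=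
  ⟨z, h, (trivial_catB h).symm⟩

end ZSetChar
section Tools
variable {G : DirGraph} {U : Set (BPS G)}

lemma range_mem_HOf (hinv : IsInvariant U) {α : FinPath G} (hα : α.IsPath)
    (hsub : ZSet α ⊆ U) : α.range ∈ HOf U := by
  intro w hw
  obtain ⟨z, hz, hw1⟩ := hw
  have hz' : z.1.start = α.range := hz
  have hyb : (α.catB z.1).IsBoundary := isBoundary_catB hα z.2 hz'
  have hyU : (⟨α.catB z.1, hyb⟩ : BPS G) ∈ U := hsub ⟨z, hz', rfl⟩
  exact hinv α ⟨α.range, []⟩ hα (trivial_isPath _) rfl z hz' ⟨α.catB z.1, hyb⟩ w rfl hw1 hyU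

lemma mem_of_HOf_decomp (hinv : IsInvariant U) {v : G.V} (hv : v ∈ HOf U)
    {β : FinPath G} (hβ : β.IsPath) (hr : β.range = v) {x : BPS G}
    (hpre : PrefixOf β x.1) : x ∈ U := by
  obtain ⟨z, hzs, hxe⟩ := mem_of_prefixOf hβ hpre
  have hzv : z.1.start = v := hzs.trans hr
  have hzU : z ∈ U := hv (mem_trivial_ZSet hzv)
  exact hinv ⟨v, []⟩ β (trivial_isPath v) hβ hr.symm z hzv z x (trivial_catB hzv).symm hxe hzU

lemma basic_aux (x : BPS G) {μ ν : FinPath G} {F E : Finset G.Ed}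
    (hμ : μ.IsPath) (hν : ν.IsPath) (hF : ∀ e ∈ F, G.src e = μ.range)
    (hE : ∀ e ∈ E, G.src e = ν.range) (hle : μ.edges.length ≤ ν.edges.length)
    (hx1 : x ∈ ZSetMinus μ F) (hx2 : x ∈ ZSetMinus ν E) :
    ∃ t ∈ {W | ∃ (ρ : FinPath G) (D : Finset G.Ed), ρ.IsPath ∧ (∀ e ∈ D, G.src e = ρ.range)
      ∧ W = ZSetMinus ρ D}, x ∈ t ∧ t ⊆ ZSetMinus μ F ∩ ZSetMinus ν E := by
  classical
  have hpμ := prefixOf_of_mem hμ hx1.1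
  have hpν := prefixOf_of_mem hν hx2.1
  rcases eq_or_lt_of_le hle with heq | hlt
  · have hμν : μ = ν := by
      obtain ⟨ms, me⟩ := μ; obtain ⟨ns, ne⟩ := ν
      have h1 : ms = ns := hpμ.1.symm.trans hpν.1
      have h2 : me = ne := by
        apply List.ext_getElem heq
        intro i hi1 hi2
        exact Option.some.inj ((hpμ.2 i hi1).symm.trans (hpν.2 i hi2))
      rw [h1, h2]
    subst hμν
    refine ⟨ZSetMinus μ (F ∪ E), ⟨μ, F ∪ E, hμ, ?_, rfl⟩, ⟨hx1.1, ?_⟩, ?_⟩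
    · intro e he
      rcases Finset.mem_union.mp he with h | h
      exacts [hF e h, hE e h]
    · intro hc
      obtain ⟨e, he, hm⟩ := Set.mem_iUnion₂.mp hc
      rcases Finset.mem_union.mp he with h | h
      · exact hx1.2 (Set.mem_iUnion₂.mpr ⟨e, h, hm⟩)
      · exact hx2.2 (Set.mem_iUnion₂.mpr ⟨e, h, hm⟩)
    · intro y hy
      refine ⟨⟨hy.1, fun hc => hy.2 ?_⟩, ⟨hy.1, fun hc => hy.2 ?_⟩⟩
      · obtain ⟨e, he, hm⟩ := Set.mem_iUnion₂.mp hc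
        exact Set.mem_iUnion₂.mpr ⟨e, Finset.mem_union_left _ he, hm⟩
      · obtain ⟨e, he, hm⟩ := Set.mem_iUnion₂.mp hc
        exact Set.mem_iUnion₂.mpr ⟨e, Finset.mem_union_right _ he, hm⟩
  · refine ⟨ZSetMinus ν E, ⟨ν, E, hν, hE, rfl⟩, hx2, fun y hy => ⟨?_, hy⟩⟩
    have hpy := prefixOf_of_mem hν hy.1
    have hstart : ν.start = μ.start := hpν.1.symm.trans hpμ.1
    have hedge : ∀ i, (hi : i < μ.edges.length) → ν.edges[i]'(by omega) = μ.edges[i] := by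
      intro i hi
      exact Option.some.inj ((hpν.2 i (by omega)).symm.trans (hpμ.2 i hi))
    have hpyμ : PrefixOf μ y.1 := ⟨hpy.1.trans hstart, fun i hi => by
      rw [hpy.2 i (by omega)]
      exact congrArg some (hedge i hi)⟩
    refine ⟨mem_of_prefixOf hμ hpyμ, fun hc => ?_⟩
    obtain ⟨e, he, hm⟩ := Set.mem_iUnion₂.mp hc
    have hext : (μ.extend e).IsPath := extend_isPath hμ (hF e he)
    have hpe := prefixOf_of_mem hext hm
    have h1 : y.1.edgeAt μ.edges.length = some e := by
      have := hpe.2 μ.edges.length (by rw [extend_length]; omega)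
      rwa [extend_getElem_last] at this
    have h2 : y.1.edgeAt μ.edges.length = some (ν.edges[μ.edges.length]'hlt) :=
      hpy.2 _ hlt
    have hee : e = ν.edges[μ.edges.length]'hlt := Option.some.inj (h1.symm.trans h2)
    have hpxe : PrefixOf (μ.extend e) x.1 := by
      refine ⟨hpμ.1, ?_⟩
      intro i hi
      have hi' : i < μ.edges.length + 1 := by rw [extend_length] at hi; exact hi
      rcases Nat.lt_or_ge i μ.edges.length with h | h
      · rw [extend_getElem_lt μ e h]
        exact hpμ.2 i h
      · have hieq : i = μ.edges.length := by omega
        subst hieq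
        rw [extend_getElem_last, hee]
        exact hpν.2 _ hlt
    exact hx1.2 (Set.mem_iUnion₂.mpr ⟨e, he, mem_of_prefixOf hext hpxe⟩)

lemma isBasis (G : DirGraph) : TopologicalSpace.IsTopologicalBasis
    {W | ∃ (μ : FinPath G) (F : Finset G.Ed),
        μ.IsPath ∧ (∀ e ∈ F, G.src e = μ.range) ∧ W = ZSetMinus μ F} := by
  refine ⟨?_, ?_, rfl⟩
  · rintro t₁ ⟨μ, F, hμ, hF, rfl⟩ t₂ ⟨ν, E, hν, hE, rfl⟩ x hx
    rcases le_total μ.edges.length ν.edges.length with h | h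
    · exact basic_aux x hμ hν hF hE h hx.1 hx.2
    · obtain ⟨t, ht, hxt, hsub⟩ := basic_aux x hν hμ hE hF h hx.2 hx.1
      exact ⟨t, ht, hxt, fun y hy => ⟨(hsub hy).2, (hsub hy).1⟩⟩
  · apply Set.sUnion_eq_univ_iff.mpr
    intro x
    refine ⟨ZSetMinus ⟨x.1.start, []⟩ ∅, ⟨⟨x.1.start, []⟩, ∅, trivial_isPath _, by simp, rfl⟩,
      mem_trivial_ZSet rfl, ?_⟩
    simp

lemma vertexOn_range (p : FinPath G) : (BPath.fin p).vertexOn p.range := by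
  rcases Nat.eq_zero_or_pos p.edges.length with h0 | h0
  · left
    exact (range_zero h0).symm
  · right
    exact ⟨p.edges[p.edges.length - 1]'(by omega), List.getElem_mem _, (range_pos h0).symm⟩

lemma boundary_sink_start {z : BPath G} (hz : z.IsBoundary) (hs : IsSink G z.start) :
    z = .fin ⟨z.start, []⟩ := by
  cases z with
  | fin q =>
    rcases Nat.eq_zero_or_pos q.edges.length with h0 | h0
    · obtain ⟨qs, qe⟩ := q
      have : qe = [] := List.length_eq_zero_iff.mp h0
      subst this
      rfl
    · exact absurd (start_src hz.1 h0) (hs _)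
  | inf f => exact absurd rfl (hs (f 0))

lemma exists_prefix_of_vertexOn {x : BPS G} {v : G.V} (hon : x.1.vertexOn v) :
    ∃ β : FinPath G, β.IsPath ∧ β.range = v ∧ PrefixOf β x.1 := by
  cases hx1 : x.1 with
  | fin p =>
    rw [hx1] at hon
    have hpp : p.IsPath := by have := x.2; rw [hx1] at this; exact this.1
    rcases hon with h | ⟨e, he, hre⟩
    · exact ⟨⟨v, []⟩, trivial_isPath v, rfl, h, fun i hi => by simp at hi⟩
    · obtain ⟨i, hi, hie⟩ := List.getElem_of_mem he
      refine ⟨⟨p.start, p.edges.take (i+1)⟩, ⟨?_, hpp.2.take _⟩, ?_, ?_⟩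
      · intro a ha
        have ha' : a ∈ (p.edges.take (i+1)).head? := ha
        have hhd : (p.edges.take (i+1)).head? = p.edges.head? := by
          cases h' : p.edges with
          | nil => rw [h'] at hi; simp at hi
          | cons b t => simp
        rw [hhd] at ha'
        exact hpp.1 a ha'
      · have hl : 0 < (p.edges.take (i+1)).length := by rw [List.length_take]; omega
        have hidx : (p.edges.take (i+1)).length - 1 = i := by rw [List.length_take]; omega
        rw [show FinPath.range ⟨p.start, p.edges.take (i+1)⟩
          = G.rng ((p.edges.take (i+1))[(p.edges.take (i+1)).length - 1]'(by omega))
          from range_pos hl]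
        rw [List.getElem_take, getElem_idx p.edges hidx (by omega) hi, hie]
        exact hre
      · refine ⟨rfl, ?_⟩
        intro j hj
        have hj' : j < (p.edges.take (i+1)).length := hj
        have hj2 : j < p.edges.length := by rw [List.length_take] at hj'; omega
        show p.edges[j]? = some ((p.edges.take (i+1))[j]'hj')
        rw [List.getElem_take, List.getElem?_eq_getElem hj2]
  | inf f =>
    rw [hx1] at hon
    have hinf : InfIsPath G f := by have := x.2; rw [hx1] at this; exact this
    rcases hon with h | ⟨n, hn⟩
    · exact ⟨⟨v, []⟩, trivial_isPath v, rfl, h, fun i hi => by simp at hi⟩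
    · refine ⟨⟨G.src (f 0), List.ofFn (fun i : Fin (n+1) => f i)⟩, ⟨?_, ?_⟩, ?_, ?_, ?_⟩
      · intro a ha
        have hlen : 0 < (List.ofFn (fun i : Fin (n+1) => f i)).length := by simp
        have ha' : a ∈ (List.ofFn (fun i : Fin (n+1) => f i)).head? := ha
        rw [head?_eq_some' _ hlen] at ha'
        have haa : a = (List.ofFn (fun i : Fin (n+1) => f i))[0]'(by omega) := by
          simpa using ha'.symm
        rw [haa]
        show G.src _ = G.src (f 0)
        rw [List.getElem_ofFn]
      · apply List.isChain_iff_getElem.mpr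
        intro j hj
        have hj' : j < (List.ofFn (fun i : Fin (n+1) => f i)).length - 1 := by
          have h' : j + 1 < (List.ofFn (fun i : Fin (n+1) => f i)).length := hj
          omega
        rw [List.length_ofFn] at hj'
        simp only [List.get_eq_getElem, List.getElem_ofFn]
        exact hinf j
      · have hlen : 0 < (List.ofFn (fun i : Fin (n+1) => f i)).length := by simp
        have hidx : (List.ofFn (fun i : Fin (n+1) => f i)).length - 1 = n := by simp
        rw [show FinPath.range ⟨G.src (f 0), List.ofFn (fun i : Fin (n+1) => f i)⟩
          = G.rng ((List.ofFn (fun i : Fin (n+1) => f i))[(List.ofFn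
              (fun i : Fin (n+1) => f i)).length - 1]'(by omega)) from range_pos hlen]
        rw [getElem_idx _ hidx (by omega) (by simp), List.getElem_ofFn]
        exact hn
      · rfl
      · intro j hj
        have hj' : j < (List.ofFn (fun i : Fin (n+1) => f i)).length := hj
        rw [List.length_ofFn] at hj'
        show some (f j) = some ((List.ofFn (fun i : Fin (n+1) => f i))[j]'hj)
        exact congrArg some (List.getElem_ofFn hj).symm

end Tools
/-- for every open invariant `U ⊆ X`, `U_{H_U, S_U} = U`. -/
theorem statement_4 (G : DirGraph) (U : Set (BPS G))
    (hopen : IsOpen U) (hinv : IsInvariant U) :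
    UHS (HOf U) (SOf U) = U := by
  apply Set.Subset.antisymm
  · rintro x (⟨v, hv, hon⟩ | ⟨p, hx1, hpS⟩)
    · obtain ⟨β, hβ, hr, hpre⟩ := exists_prefix_of_vertexOn hon
      exact mem_of_HOf_decomp hinv hv hβ hr hpre
    · obtain ⟨y, hyU, q, hy1, hqr, hem, _⟩ := hpS
      have hp : p.IsPath := by have := x.2; rw [hx1] at this; exact this.1
      have hq : q.IsPath := by have := y.2; rw [hy1] at this; exact this.1
      have hzb : (BPath.fin ⟨p.range, []⟩ : BPath G).IsBoundary :=
        ⟨trivial_isPath _, Or.inr hem⟩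
      have hcat : ∀ r : FinPath G, r.catB (BPath.fin ⟨p.range, []⟩) = BPath.fin r := by
        intro r
        show BPath.fin ⟨r.start, r.edges ++ []⟩ = BPath.fin r
        rw [List.append_nil]
      exact hinv q p hq hp hqr (⟨.fin ⟨p.range, []⟩, hzb⟩ : BPS G) hqr.symm
        y x (by rw [hy1, hcat]) (by rw [hx1, hcat]) hyU
  · intro x hxU
    obtain ⟨t, ⟨μ, F, hμ, hF, rfl⟩, hxt, htU⟩ :=
      (isBasis G).exists_subset_of_mem_open hxU hopen
    cases hx1 : x.1 with
    | inf f =>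
      have hinf : InfIsPath G f := by have := x.2; rw [hx1] at this; exact this
      have hpre' := prefixOf_of_mem hμ hxt.1
      rw [hx1] at hpre'
      have hsrc : G.src (f μ.edges.length) = μ.range := by
        rcases Nat.eq_zero_or_pos μ.edges.length with h0 | h0
        · rw [h0]
          exact (hpre'.1).trans (range_zero h0).symm
        · have hc := hinf (μ.edges.length - 1)
          rw [show μ.edges.length - 1 + 1 = μ.edges.length from by omega] at hc
          rw [← hc, show f (μ.edges.length - 1) = μ.edges[μ.edges.length - 1]'(by omega)
            from Option.some.inj (hpre'.2 (μ.edges.length - 1) (by omega))]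
          exact (range_pos h0).symm
      have hext : (μ.extend (f μ.edges.length)).IsPath := extend_isPath hμ hsrc
      have hpe : PrefixOf (μ.extend (f μ.edges.length)) (BPath.inf f) := by
        refine ⟨hpre'.1, ?_⟩
        intro i hi
        have hi' : i < μ.edges.length + 1 := by rw [extend_length] at hi; exact hi
        rcases Nat.lt_or_ge i μ.edges.length with h | h
        · rw [extend_getElem_lt μ _ h]
          exact hpre'.2 i h
        · have hieq : i = μ.edges.length := by omega
          subst hieq
          rw [extend_getElem_last]
          rfl
      have hxe : x ∈ ZSet (μ.extend (f μ.edges.length)) :=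
        mem_of_prefixOf hext (by rw [hx1]; exact hpe)
      have hsub : ZSet (μ.extend (f μ.edges.length)) ⊆ U := by
        intro y hy
        apply htU
        have hpy := prefixOf_of_mem hext hy
        have hpyμ : PrefixOf μ y.1 := ⟨hpy.1, fun i hi => by
          rw [hpy.2 i (by rw [extend_length]; omega)]
          exact congrArg some (extend_getElem_lt μ _ hi)⟩
        refine ⟨mem_of_prefixOf hμ hpyμ, fun hc => ?_⟩
        obtain ⟨g, hg, hm⟩ := Set.mem_iUnion₂.mp hc
        have hgext : (μ.extend g).IsPath := extend_isPath hμ (hF g hg)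
        have hpg := prefixOf_of_mem hgext hm
        have h1 : y.1.edgeAt μ.edges.length = some g := by
          have := hpg.2 μ.edges.length (by rw [extend_length]; omega)
          rwa [extend_getElem_last] at this
        have h2 : y.1.edgeAt μ.edges.length = some (f μ.edges.length) := by
          have := hpy.2 μ.edges.length (by rw [extend_length]; omega)
          rwa [extend_getElem_last] at this
        have hgf : g = f μ.edges.length := Option.some.inj (h1.symm.trans h2)
        rw [hgf] at hg
        exact hxt.2 (Set.mem_iUnion₂.mpr ⟨f μ.edges.length, hg, hxe⟩)
      have hH : G.rng (f μ.edges.length) ∈ HOf U := by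
        have := range_mem_HOf hinv hext hsub
        rwa [extend_range] at this
      left
      exact ⟨G.rng (f μ.edges.length), hH, by rw [hx1]; exact Or.inr ⟨μ.edges.length, rfl⟩⟩
    | fin p =>
      have hp : p.IsPath := by have := x.2; rw [hx1] at this; exact this.1
      have hbd : IsSink G p.range ∨ IsInfEmitter G p.range := by
        have := x.2; rw [hx1] at this; exact this.2
      by_cases hH : p.range ∈ HOf U
      · left
        exact ⟨p.range, hH, by rw [hx1]; exact vertexOn_range p⟩
      · rcases hbd with hsink | hem
        · exfalso
          apply hH
          apply range_mem_HOf hinv hp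
          intro y hy
          obtain ⟨z, hzs, hye⟩ := hy
          have hzb := boundary_sink_start z.2 (by rw [hzs]; exact hsink)
          have hye' : y.1 = x.1 := by
            rw [hye, hzb, hzs, hx1]
            show BPath.fin ⟨p.start, p.edges ++ []⟩ = BPath.fin p
            rw [List.append_nil]
          rw [Subtype.ext hye']
          exact hxU
        · right
          exact ⟨p, hx1, x, hxU, p, hx1, rfl, hem, hH⟩

end GraphLPA
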